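/- With N : ℤ → ℤ[[z]] satisfying N(k+1) - N(k-1) = z·N(k), N(0)=0, N(1)=1, for every integer p one has N(2p+1) = Ψ(p,z) = Σ_{i≥0} C(p+i, 2i) z^{2i}; in particular the z²-coefficient of N(2p+1) is p(p+1)/2. -/

import Mathlib

/-- Φ(t,z) = Σ_{i≥0} C(t+i, 2i+1) z^{2i+1} in ℤ[[z]]. -/
noncomputable def Phi (t : ℤ) : PowerSeries ℤ :=
  PowerSeries.mk fun n => if n % 2 = 1 then Ring.choose (t + (n / 2 : ℕ)) n else 0

/-- Ψ(t,z) = Σ_{i≥0} C(t+i, 2i) z^{2i} in ℤ[[z]]. -/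
noncomputable def Psi (t : ℤ) : PowerSeries ℤ :=
  PowerSeries.mk fun n => if n % 2 = 0 then Ring.choose (t + (n / 2 : ℕ)) n else 0

lemma helper_sub {M : Type*} [AddCommGroup M] {a b c : M} (h : a - b = c) : b = a - c := by
  rw [← h]; abel

lemma helper_add {M : Type*} [AddCommGroup M] {a b c : M} (h : a - b = c) : a = b + c := by
  rw [← h]; abel

lemma phi_zero : Phi 0 = 0 := by
  ext n
  simp only [Phi, PowerSeries.coeff_mk, map_zero]
  rcases Nat.even_or_odd n with ⟨i, rfl⟩ | ⟨i, rfl⟩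
  · rw [if_neg (by omega)]
  · have h2 : (2 * i + 1) / 2 = i := by omega
    rw [if_pos (by omega), h2, zero_add]
    rw [show ((i : ℤ)) = ((i : ℕ) : ℤ) from rfl, Ring.choose_natCast]
    rw [Nat.choose_eq_zero_of_lt (by omega)]
    simp

lemma psi_zero : Psi 0 = 1 := by
  ext n
  simp only [Psi, PowerSeries.coeff_mk, PowerSeries.coeff_one]
  rcases Nat.even_or_odd n with ⟨i, rfl⟩ | ⟨i, rfl⟩
  · have h2 : (i + i) / 2 = i := by omega
    rw [if_pos (by omega), h2, zero_add]
    rw [show ((i : ℤ)) = ((i : ℕ) : ℤ) from rfl, Ring.choose_natCast]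
    rcases Nat.eq_zero_or_pos i with rfl | hi
    · simp
    · rw [Nat.choose_eq_zero_of_lt (by omega), if_neg (by omega)]
      simp
  · rw [if_neg (by omega), if_neg (by omega)]

lemma phi_step (t : ℤ) : Phi (t + 1) = Phi t + PowerSeries.X * Psi t := by
  ext n
  simp only [Phi, Psi, map_add, PowerSeries.coeff_mk]
  rcases Nat.even_or_odd n with ⟨i, rfl⟩ | ⟨i, rfl⟩
  · have h1 : ¬ ((i + i) % 2 = 1) := by omega
    rw [if_neg h1, if_neg h1, zero_add]
    rcases Nat.eq_zero_or_pos i with rfl | hi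
    · simp
    · have h3 : i + i = (i + i - 1) + 1 := by omega
      rw [h3, PowerSeries.coeff_succ_X_mul, PowerSeries.coeff_mk]
      rw [if_neg (by omega)]
  · have h1 : (2 * i + 1) % 2 = 1 := by omega
    have h2 : (2 * i + 1) / 2 = i := by omega
    rw [if_pos h1, if_pos h1, h2]
    rw [show 2 * i + 1 = (2 * i) + 1 from rfl, PowerSeries.coeff_succ_X_mul,
      PowerSeries.coeff_mk]
    rw [if_pos (by omega), show (2 * i) / 2 = i by omega]
    have hp := Ring.choose_succ_succ ((t : ℤ) + i) (2 * i)
    rw [show t + 1 + (i : ℤ) = t + i + 1 by ring, hp, add_comm]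

lemma psi_step (t : ℤ) : Psi t = Psi (t - 1) + PowerSeries.X * Phi t := by
  ext n
  simp only [Phi, Psi, map_add, PowerSeries.coeff_mk]
  rcases Nat.even_or_odd n with ⟨i, rfl⟩ | ⟨i, rfl⟩
  · have h1 : (i + i) % 2 = 0 := by omega
    have h2 : (i + i) / 2 = i := by omega
    rw [if_pos h1, if_pos h1, h2]
    rcases Nat.eq_zero_or_pos i with rfl | hi
    · simp
    · have h3 : i + i = (i + i - 1) + 1 := by omega
      rw [h3, PowerSeries.coeff_succ_X_mul, PowerSeries.coeff_mk]
      rw [if_pos (by omega), show (i + i - 1) / 2 = i - 1 by omega]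
      have hc : ((i - 1 : ℕ) : ℤ) = (i : ℤ) - 1 := by
        rw [Nat.cast_sub hi, Nat.cast_one]
      rw [hc, show t + ((i : ℤ) - 1) = t - 1 + i by ring]
      have hp := Ring.choose_succ_succ ((t : ℤ) - 1 + i) (i + i - 1)
      rw [show (i + i - 1) + 1 = i + i by omega,
        show t - 1 + (i : ℤ) + 1 = t + i by ring] at hp
      rw [← h3, hp, add_comm]
  · have h1 : ¬ ((2 * i + 1) % 2 = 0) := by omega
    rw [if_neg h1, if_neg h1, zero_add]
    rw [show 2 * i + 1 = (2 * i) + 1 from rfl, PowerSeries.coeff_succ_X_mul,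
      PowerSeries.coeff_mk, if_neg (by omega)]

lemma choose_two (r : ℤ) : Ring.choose r 2 = r * (r - 1) / 2 := by
  have h := Ring.descPochhammer_eq_factorial_smul_choose r 2
  have hd : (descPochhammer ℤ 2).smeval r = r * (r - 1) := by
    rw [show (2:ℕ) = 1 + 1 from rfl, descPochhammer_succ_right, descPochhammer_one,
      Polynomial.smeval_mul, Polynomial.smeval_sub, Polynomial.smeval_X,
      Polynomial.smeval_natCast]
    ring
  rw [hd, show Nat.factorial 2 = 2 from rfl] at h
  rw [nsmul_eq_mul] at h
  push_cast at h
  rw [h, Int.mul_ediv_cancel_left _ (by norm_num)]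

theorem N_odd (N : ℤ → PowerSeries ℤ)
    (hrec : ∀ k : ℤ, N (k + 1) - N (k - 1) = PowerSeries.X * N k)
    (h0 : N 0 = 0) (h1 : N 1 = 1) :
    ∀ p : ℤ, N (2 * p + 1) = Psi p ∧
      PowerSeries.coeff 2 (N (2 * p + 1)) = p * (p + 1) / 2 := by
  have key : ∀ p : ℤ, N (2 * p) = Phi p ∧ N (2 * p + 1) = Psi p := by
    intro p
    induction p using Int.induction_on with
    | zero =>
      constructor
      · simpa [phi_zero] using h0
      · simpa [psi_zero] using h1
    | succ p ih =>
      obtain ⟨ihe, iho⟩ := ih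
      have h := hrec (2 * p + 1)
      rw [show 2 * (p : ℤ) + 1 + 1 = 2 * (p + 1) by ring,
        show 2 * (p : ℤ) + 1 - 1 = 2 * p by ring] at h
      have e1 : N (2 * ((p : ℤ) + 1)) = Phi (p + 1) := by
        rw [helper_add h, ihe, iho, phi_step]
      refine ⟨e1, ?_⟩
      have h2 := hrec (2 * ((p : ℤ) + 1))
      rw [show 2 * ((p : ℤ) + 1) - 1 = 2 * p + 1 by ring] at h2
      rw [helper_add h2, iho, e1, psi_step (p + 1), add_sub_cancel_right]
    | pred p ih =>
      obtain ⟨ihe, iho⟩ := ih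
      have h := hrec (2 * (-p : ℤ))
      have e1 : N (2 * (-p : ℤ) - 1) = Psi (-p - 1) := by
        rw [helper_sub h, iho, ihe, psi_step (-p)]
        abel
      have h2 := hrec (2 * (-p : ℤ) - 1)
      rw [show 2 * (-p : ℤ) - 1 + 1 = 2 * (-p) by ring,
        show 2 * (-p : ℤ) - 1 - 1 = 2 * (-(p : ℤ) - 1) by ring] at h2
      have e2 : N (2 * (-(p : ℤ) - 1)) = Phi (-p - 1) := by
        have hphi := phi_step (-(p : ℤ) - 1)
        rw [show -(p : ℤ) - 1 + 1 = -p by ring] at hphi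
        rw [helper_sub h2, ihe, e1, hphi]
        abel
      refine ⟨e2, ?_⟩
      rw [show 2 * (-(p : ℤ) - 1) + 1 = 2 * (-p) - 1 by ring, e1]
  intro p
  obtain ⟨_, ho⟩ := key p
  refine ⟨ho, ?_⟩
  rw [ho]
  simp only [Psi, PowerSeries.coeff_mk]
  norm_num
  rw [choose_two]
  rw [show (p : ℤ) + 1 - 1 = p by ring, mul_comm]
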